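/- Monotone flow equation: let A be a field of characteristic zero, let h ∈ G^0, and for t ∈ A define the series M_t := 1 + Σ_{n≥1} (t^n/n!)·R^{(n−1)}(h), where R^{(0)}(h) := h and R^{(n)}(h) := R^{(n−1)}(h) ◁ h (on each word w this sum is finite since R^{(n−1)}(h)(w) = 0 whenever n exceeds the length of w, so each coefficient M_t(w) is a polynomial function of t). Then M_0 = 1, M_t ∈ G^1, and the coefficient-wise t-derivative satisfies d/dt M_t = M_t · h(x M_t(x)) = h + (M_t − 1) ◁ h, where h(x M_t(x)) is the shifted substitution of M_t into h. -/

import Mathlib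

/-- Words over the alphabet of positive integers. -/
abbrev Word : Type := List ℕ+

variable {A : Type*}

/-- The constant series `1`: coefficient `1` on the empty word, `0` elsewhere. -/
def one [CommRing A] : Word → A := fun w => if w = [] then 1 else 0

/-- Cauchy product of noncommutative series:
`(f·g)(w) = Σ f(u) g(v)` over all factorizations `w = u ++ v`. -/
def cauchy [CommRing A] (f g : Word → A) : Word → A := fun w =>
  ∑ k ∈ Finset.range (w.length + 1), f (w.take k) * g (w.drop k)

/-- The subword of `w` consisting of the letters at positions in `S` (in increasing order). -/
def subword (w : Word) (S : Finset ℕ) : Word :=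
  ((w.zipIdx.map Prod.swap).filter (fun p => decide (p.1 ∈ S))).map Prod.snd

/-- The (possibly empty) factor of `w` occupying the positions strictly between `s` and the
next element of `S` after `s` (or the end of the word if there is no such element). -/
def gapAfter (w : Word) (S : Finset ℕ) (s : ℕ) : Word :=
  ((w.zipIdx.map Prod.swap).filter (fun p => decide (s < p.1 ∧ ∀ j ∈ S, j ≤ s ∨ p.1 < j))).map Prod.snd

/-- Shifted substitution `f(xg(x))`: its constant coefficient is `f(∅)`, and its coefficient
on a nonempty word `w = a_1⋯a_n` is the sum, over subsets `S = {s_1<⋯<s_k}` of the positions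
of `w` containing the first position, of `f(a_{s_1}⋯a_{s_k})·g(w_{(s_1,s_2)})⋯g(w_{(s_k,n+1)})`,
where `w_{(s_j,s_{j+1})}` is the factor of `w` strictly between positions `s_j` and `s_{j+1}`. -/
def subst [CommRing A] (f g : Word → A) : Word → A := fun w =>
  if w = [] then f []
  else ∑ S ∈ (Finset.range w.length).powerset.filter (fun S => 0 ∈ S),
    f (subword w S) * ∏ s ∈ S, g (gapAfter w S s)

/-- Shifted composition `f • g := g · f(xg(x))`. -/
def bullet [CommRing A] (f g : Word → A) : Word → A := cauchy g (subst f g)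

/-- The insertion (pre-Lie) product on series with zero constant coefficient:
`(f ◁ g)(w) = Σ f(u ++ v) g(q)` over all factorizations `w = u ++ q ++ v` of `w` into
three consecutive (possibly empty) factors. -/
def tri [CommRing A] (f g : Word → A) : Word → A := fun w =>
  ∑ i ∈ Finset.range (w.length + 1), ∑ j ∈ Finset.Icc i w.length,
    f (w.take i ++ w.drop j) * g ((w.drop i).take (j - i))

/-- Iterated right pre-Lie powers: `R h 0 = h = R^{(0)}(h)` and
`R h n = R h (n-1) ◁ h = R^{(n)}(h)`. -/
def R [CommRing A] (h : Word → A) : ℕ → (Word → A)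
  | 0 => h
  | n + 1 => tri (R h n) h

/-- The coefficient of `M_t := 1 + Σ_{n≥1} (t^n/n!)·R^{(n−1)}(h)` on a word `w`, as a
polynomial in the formal parameter `t`; the sum truncates at `n = |w|` since
`R^{(n−1)}(h)(w) = 0` for `n > |w|`. -/
noncomputable def Mpoly [Field A] (h : Word → A) (w : Word) : Polynomial A :=
  Polynomial.C (one w) +
    ∑ n ∈ Finset.Icc 1 w.length,
      Polynomial.C (R h (n - 1) w / (n.factorial : A)) * Polynomial.X ^ n

/-!
Write `f • g := g · f(xg(x))` (`bullet`) and `M` for the series `w ↦ Mpoly h w` of polynomials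
in `t`. Peeling off the first letter gives `f(xg(x))(b u) = (g · f_b(xg(x)))(u)`, where
`f_b(v) := f(b v)`. From this recursion, substitution is multiplicative, and for any derivation
`D`: if `D g = H • g` on shorter words and `D F = 0`, then `D (F(xg(x))) = (F ◁' H)(xg(x))`,
where `◁'` inserts only after the first letter. Since `F ◁ H = H · F + F ◁' H`, this gives
`D (F • g) = (F ◁ H) • g` when `F(∅) = 0`.
If `M' = h • M` on shorter words, induction on `j` shows that the coefficient of `t^j` in
`(f • M)(w)` is `(f ◁ h ◁ ⋯ ◁ h)(w) / j!`. For `f = h` this is the coefficient of `t^j` in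
`M'(w)`, so `M' = h • M` follows by induction on the length of `w`.
-/

open Finset Polynomial

def lettersAt (l : Word) (p : ℕ → Prop) [DecidablePred p] : Word :=
  ((l.zipIdx.map Prod.swap).filter (fun q => decide (p q.1))).map Prod.snd

section lettersAt
variable (p q : ℕ → Prop) [DecidablePred p] [DecidablePred q]

@[simp] lemma lettersAt_nil : lettersAt [] p = [] := rfl

lemma lettersAt_cons (a : ℕ+) (l : Word) :
    lettersAt (a :: l) p = (if p 0 then [a] else []) ++ lettersAt l (fun i => p (i + 1)) := by
  simp only [lettersAt, List.zipIdx_cons, List.zipIdx_succ, List.map_cons, List.map_map,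
    List.filter_cons, List.filter_map]
  split_ifs <;> simp_all [Function.comp_def]

lemma lettersAt_congr {l : Word} (h : ∀ i < l.length, (p i ↔ q i)) :
    lettersAt l p = lettersAt l q := by
  induction l generalizing p q with
  | nil => rfl
  | cons a l ih =>
    simp only [List.length_cons] at h
    rw [lettersAt_cons, lettersAt_cons, if_congr (h 0 (by omega)) rfl rfl,
      ih _ _ fun i hi => h (i + 1) (by omega)]

lemma lettersAt_eq_lettersAt_drop (l : Word) (k : ℕ) (h : ∀ i < k, ¬ p i) :
    lettersAt l p = lettersAt (l.drop k) (fun i => p (i + k)) := by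
  induction k generalizing l p with
  | zero => rfl
  | succ k ih =>
    cases l with
    | nil => rfl
    | cons a l =>
      rw [lettersAt_cons, if_neg (h 0 (by omega)), List.nil_append, List.drop_succ_cons,
        ih _ _ fun i hi => h (i + 1) (by omega)]
      simp only [Nat.add_assoc]

lemma lettersAt_lt (l : Word) (k : ℕ) : lettersAt l (· < k) = l.take k := by
  induction l generalizing k with
  | nil => simp
  | cons a l ih =>
    cases k with
    | zero =>
      rw [lettersAt_cons, if_neg (by omega), lettersAt_congr _ (· < 0) (by omega), ih]
      rfl
    | succ k => simp [lettersAt_cons, ← ih]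

end lettersAt

lemma subword_eq_lettersAt (w : Word) (S : Finset ℕ) : subword w S = lettersAt w (· ∈ S) := rfl

lemma gapAfter_eq_lettersAt (w : Word) (S : Finset ℕ) (s : ℕ) :
    gapAfter w S s = lettersAt w (fun i => s < i ∧ ∀ j ∈ S, j ≤ s ∨ i < j) := rfl

lemma subword_cons_singleton_zero (b : ℕ+) (u : Word) : subword (b :: u) {0} = [b] := by
  rw [subword_eq_lettersAt, lettersAt_cons, if_pos (mem_singleton_self 0),
    lettersAt_eq_lettersAt_drop _ u u.length (by simp), List.drop_length, lettersAt_nil,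
    List.singleton_append]

lemma gapAfter_cons_singleton_zero (b : ℕ+) (u : Word) : gapAfter (b :: u) {0} 0 = u := by
  rw [gapAfter_eq_lettersAt, lettersAt_cons, if_neg (by omega), List.nil_append]
  conv_rhs => rw [← List.take_length (l := u), ← lettersAt_lt]
  exact lettersAt_congr _ _ fun i hi => by simp [hi]

section shift
variable (b : ℕ+) (u : Word) (k : ℕ) (S : Finset ℕ)

lemma subword_cons_insert_zero_image :
    subword (b :: u) (insert 0 (S.image (· + (k + 1)))) = b :: subword (u.drop k) S := by
  have hlow : ∀ i < k, i + 1 ∉ insert 0 (S.image (· + (k + 1))) := by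
    intro i hi
    simp only [mem_insert, mem_image, not_or]
    omega
  rw [subword_eq_lettersAt, lettersAt_cons, subword_eq_lettersAt, if_pos (mem_insert_self _ _),
    lettersAt_eq_lettersAt_drop _ u k hlow]
  exact congrArg _ (lettersAt_congr _ _ fun i _ => by simp [← add_assoc])

lemma gapAfter_cons_insert_zero_image_zero (h0 : 0 ∈ S) :
    gapAfter (b :: u) (insert 0 (S.image (· + (k + 1)))) 0 = u.take k := by
  rw [gapAfter_eq_lettersAt, lettersAt_cons, if_neg (by omega), List.nil_append, ← lettersAt_lt]
  refine lettersAt_congr _ _ fun i _ => ?_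
  simp only [mem_insert, mem_image, forall_eq_or_imp, forall_exists_index, and_imp,
    forall_apply_eq_imp_iff₂, le_refl, true_or, true_and]
  exact ⟨fun h => by have := h.2 0 h0; omega, fun h => ⟨by omega, fun j _ => by omega⟩⟩

lemma gapAfter_cons_insert_zero_image_add (s : ℕ) :
    gapAfter (b :: u) (insert 0 (S.image (· + (k + 1)))) (s + (k + 1)) =
      gapAfter (u.drop k) S s := by
  rw [gapAfter_eq_lettersAt, lettersAt_cons, if_neg (by omega), List.nil_append,
    lettersAt_eq_lettersAt_drop _ u k (fun i hi => by omega), gapAfter_eq_lettersAt]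
  refine lettersAt_congr _ _ fun i _ => ?_
  simp only [← add_assoc, mem_insert, mem_image, forall_eq_or_imp, forall_exists_index, and_imp,
    forall_apply_eq_imp_iff₂, add_lt_add_iff_right, add_le_add_iff_right, zero_le, true_or,
    true_and]

end shift

section powerset
variable {M : Type*} [AddCommMonoid M]

lemma sum_powerset_range_add_one (ψ : Finset ℕ → M) (n : ℕ) :
    ∑ T ∈ (range (n + 1)).powerset, ψ T =
      ∑ T ∈ (range n).powerset, ψ (T.image (· + 1)) +
        ∑ T ∈ (range n).powerset, ψ (insert 0 (T.image (· + 1))) := by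
  have hinj := image_injOn_powerset_of_injOn (s := range n) (add_left_injective 1).injOn
  have hrange : range (n + 1) = insert 0 ((range n).image (· + 1)) := by
    ext (_ | x) <;> simp
  rw [hrange, sum_powerset_insert (by simp), powerset_image, sum_image hinj, sum_image hinj]

lemma sum_powerset_range_eq_add_sum_min (ψ : Finset ℕ → M) (n : ℕ) :
    ∑ T ∈ (range n).powerset, ψ T = ψ ∅ +
      ∑ k ∈ range n, ∑ T ∈ (range (n - (k + 1))).powerset,
        ψ (insert k (T.image (· + (k + 1)))) := by
  induction n generalizing ψ with
  | zero => simp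
  | succ n ih =>
    rw [sum_powerset_range_add_one, ih, sum_range_succ', add_assoc]
    congr 2
    simp only [Nat.add_sub_add_right]
    refine sum_congr rfl fun k _ => sum_congr rfl fun T _ => congrArg ψ ?_
    ext x
    simp [add_assoc]

lemma sum_powerset_range_add_one_filter_zero_mem (ψ : Finset ℕ → M) (n : ℕ) :
    ∑ S ∈ (range (n + 1)).powerset with 0 ∈ S, ψ S =
      ∑ T ∈ (range n).powerset, ψ (insert 0 (T.image (· + 1))) := by
  rw [sum_filter, sum_powerset_range_add_one]
  simp

/-- Splitting a set `S ∋ 0` of positions other than `{0}` according to its second least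
element `k + 1`. -/
lemma sum_powerset_range_add_one_filter_zero_mem_eq (ψ : Finset ℕ → M) (n : ℕ) :
    ∑ S ∈ (range (n + 1)).powerset with 0 ∈ S, ψ S = ψ {0} +
      ∑ k ∈ range n, ∑ S ∈ (range (n - k)).powerset with 0 ∈ S,
        ψ (insert 0 (S.image (· + (k + 1)))) := by
  rw [sum_powerset_range_add_one_filter_zero_mem, sum_powerset_range_eq_add_sum_min, image_empty]
  refine congrArg _ (sum_congr rfl fun k hk => ?_)
  rw [show n - k = n - (k + 1) + 1 by rw [mem_range] at hk; omega,
    sum_powerset_range_add_one_filter_zero_mem]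
  refine sum_congr rfl fun T _ => congrArg ψ ?_
  ext x
  simp [add_assoc, add_comm 1]

end powerset

section series
variable [CommRing A]

@[simp] lemma cauchy_nil (f g : Word → A) : cauchy f g [] = f [] * g [] := by
  simp [cauchy]

lemma cauchy_cons (f g : Word → A) (b : ℕ+) (u : Word) :
    cauchy f g (b :: u) = f [] * g (b :: u) + cauchy (fun v => f (b :: v)) g u := by
  rw [cauchy, List.length_cons, sum_range_succ']
  simp [cauchy, add_comm]

lemma cauchy_comp_cons (f g : Word → A) (b : ℕ+) :
    (fun v => cauchy f g (b :: v)) =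
      f [] • (fun v => g (b :: v)) + cauchy (fun v => f (b :: v)) g := by
  ext v
  simp [cauchy_cons]

lemma cauchy_congr {f₁ f₂ g₁ g₂ : Word → A} {w : Word}
    (h : ∀ k ≤ w.length,
      f₁ (w.take k) * g₁ (w.drop k) = f₂ (w.take k) * g₂ (w.drop k)) :
    cauchy f₁ g₁ w = cauchy f₂ g₂ w :=
  sum_congr rfl fun k hk => h k (Nat.lt_succ_iff.mp (mem_range.mp hk))

lemma cauchy_add_left (f₁ f₂ g : Word → A) :
    cauchy (f₁ + f₂) g = cauchy f₁ g + cauchy f₂ g := by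
  ext w
  simp [cauchy, add_mul, sum_add_distrib]

lemma cauchy_add_right (f g₁ g₂ : Word → A) :
    cauchy f (g₁ + g₂) = cauchy f g₁ + cauchy f g₂ := by
  ext w
  simp [cauchy, mul_add, sum_add_distrib]

lemma cauchy_smul_left (c : A) (f g : Word → A) : cauchy (c • f) g = c • cauchy f g := by
  ext w
  simp [cauchy, mul_sum, mul_assoc]

lemma cauchy_smul_right (c : A) (f g : Word → A) : cauchy f (c • g) = c • cauchy f g := by
  ext w
  simp [cauchy, mul_sum, mul_left_comm]

lemma cauchy_one_left (f : Word → A) : cauchy one f = f := by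
  ext w
  rw [cauchy, sum_eq_single 0 (fun k hk hk0 => ?_) (by simp)]
  · simp [one]
  · simp only [one, List.take_eq_nil_iff, ite_mul, one_mul, zero_mul, ite_eq_right_iff]
    rintro (rfl | rfl) <;> simp_all

lemma cauchy_assoc (f g h : Word → A) : cauchy (cauchy f g) h = cauchy f (cauchy g h) := by
  ext w
  induction w generalizing f with
  | nil => simp [mul_assoc]
  | cons b u ih =>
    rw [cauchy_cons, cauchy_cons, cauchy_cons, cauchy_comp_cons, cauchy_add_left,
      cauchy_smul_left, Pi.add_apply, Pi.smul_apply, smul_eq_mul, ih, cauchy_nil]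
    ring

lemma map_cauchy {B : Type*} [CommRing B] (φ : A →+* B) (f g : Word → A) (w : Word) :
    φ (cauchy f g w) = cauchy (fun v => φ (f v)) (fun v => φ (g v)) w := by
  simp [cauchy]

@[simp] lemma subst_nil (f g : Word → A) : subst f g [] = f [] := if_pos rfl

/-- In `f(xg(x))` on `b u`, the gap after the first letter is a prefix `u.take k`, and the remaining
positions give a substitution on `u.drop k`. -/
lemma subst_cons (f g : Word → A) (b : ℕ+) (u : Word) :
    subst f g (b :: u) = cauchy g (subst (fun v => f (b :: v)) g) u := by
  rw [subst, if_neg (List.cons_ne_nil b u), List.length_cons,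
    sum_powerset_range_add_one_filter_zero_mem_eq, cauchy, sum_range_succ, add_comm]
  congr 1
  · refine sum_congr rfl fun k hk => ?_
    have hne : u.drop k ≠ [] := by
      simp only [mem_range] at hk
      simp only [ne_eq, List.drop_eq_nil_iff, not_le, hk]
    rw [subst, if_neg hne, List.length_drop, mul_sum]
    refine sum_congr rfl fun S hS => ?_
    rw [subword_cons_insert_zero_image, prod_insert (by simp),
      gapAfter_cons_insert_zero_image_zero _ _ _ _ (mem_filter.mp hS).2, prod_image (by simp)]
    simp only [gapAfter_cons_insert_zero_image_add]
    ring
  · rw [List.take_length, List.drop_length, subst_nil, prod_singleton,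
      subword_cons_singleton_zero, gapAfter_cons_singleton_zero, mul_comm]

lemma subst_add (f₁ f₂ g : Word → A) :
    subst (f₁ + f₂) g = subst f₁ g + subst f₂ g := by
  ext w
  by_cases hw : w = [] <;> simp [subst, hw, add_mul, sum_add_distrib]

lemma subst_smul (c : A) (f g : Word → A) : subst (c • f) g = c • subst f g := by
  ext w
  by_cases hw : w = [] <;> simp [subst, hw, mul_sum, mul_assoc]

lemma subst_one (f : Word → A) : subst f one = f := by
  ext w
  induction w generalizing f with
  | nil => simp
  | cons b u ih => rw [subst_cons, cauchy_one_left, ih]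

lemma subst_cauchy (p q g : Word → A) :
    subst (cauchy p q) g = cauchy (subst p g) (subst q g) := by
  ext w
  induction hn : w.length using Nat.strong_induction_on generalizing w p with
  | _ n ih =>
  cases w with
  | nil => simp
  | cons b u =>
    have htail : ∀ k ≤ u.length, subst (cauchy (fun v => p (b :: v)) q) g (u.drop k) =
        cauchy (subst (fun v => p (b :: v)) g) (subst q g) (u.drop k) :=
      fun k _ => ih _ (by simp only [List.length_drop, ← hn, List.length_cons]; omega) _ _ rfl
    have hsubst : (fun v => subst p g (b :: v)) = cauchy g (subst (fun v => p (b :: v)) g) := by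
      ext v
      exact subst_cons p g b v
    rw [subst_cons, cauchy_comp_cons, subst_add, subst_smul, cauchy_add_right,
      cauchy_smul_right, Pi.add_apply, Pi.smul_apply, ← subst_cons,
      cauchy_congr fun k hk => by rw [htail k hk], ← cauchy_assoc, ← hsubst, cauchy_cons,
      subst_nil, smul_eq_mul]

lemma map_subst {B : Type*} [CommRing B] (φ : A →+* B) (f g : Word → A) (w : Word) :
    φ (subst f g w) = subst (fun v => φ (f v)) (fun v => φ (g v)) w := by
  by_cases hw : w = [] <;> simp [subst, hw]

/-- The part of `f ◁ g` in which the factor `g` is inserted after the first letter. -/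
def triTail (f g : Word → A) : Word → A
  | [] => 0
  | c :: v => tri (fun x => f (c :: x)) g v

lemma tri_eq_cauchy_add_triTail (f g : Word → A) : tri f g = cauchy g f + triTail f g := by
  ext w
  cases w with
  | nil => simp [tri, triTail, mul_comm]
  | cons c v =>
    rw [tri, List.length_cons, sum_range_succ', add_comm, Pi.add_apply, cauchy]
    congr 1
    · rw [← Nat.range_succ_eq_Icc_zero]
      refine sum_congr rfl fun j _ => ?_
      simp [mul_comm]
    · rw [triTail, tri]
      refine sum_congr rfl fun i _ => ?_
      rw [← image_add_right_Icc, sum_image (by simp)]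
      refine sum_congr rfl fun j _ => ?_
      simp

lemma map_tri {B : Type*} [CommRing B] (φ : A →+* B) (f g : Word → A) (w : Word) :
    φ (tri f g w) = tri (fun v => φ (f v)) (fun v => φ (g v)) w := by
  simp [tri]

lemma R_apply_eq_zero (h : Word → A) (hh : h [] = 0) (n : ℕ) (w : Word) (hw : w.length ≤ n) :
    R h n w = 0 := by
  induction n generalizing w with
  | zero => rw [List.length_eq_zero_iff.mp (Nat.le_zero.mp hw)]; exact hh
  | succ n ih =>
    rw [R, tri]
    refine sum_eq_zero fun i _ => sum_eq_zero fun j hj => ?_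
    obtain ⟨hij, hjw⟩ := mem_Icc.mp hj
    rcases hij.eq_or_lt with rfl | hij
    · simp [hh]
    · rw [ih _ (by simp only [List.length_append, List.length_take, List.length_drop]; omega),
        zero_mul]

lemma R_eq_iterate (h : Word → A) (n : ℕ) : R h n = (fun f => tri f h)^[n] h := by
  induction n with
  | zero => rfl
  | succ n ih => rw [Function.iterate_succ_apply', ← ih]; rfl

end series

section derivation
variable {R S : Type*} [CommRing R] [CommRing S] [Algebra R S] (D : Derivation R S S)

lemma derivation_cauchy (f g : Word → S) (w : Word) :
    D (cauchy f g w) = cauchy (fun v => D (f v)) g w + cauchy f (fun v => D (g v)) w := by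
  simp [cauchy, Derivation.leibniz, sum_add_distrib, mul_comm]

lemma derivation_subst (F H g : Word → S) (hF : ∀ v, D (F v) = 0) (w : Word)
    (hg : ∀ v : Word, v.length < w.length → D (g v) = bullet H g v) :
    D (subst F g w) = subst (triTail F H) g w := by
  induction hn : w.length using Nat.strong_induction_on generalizing w F with
  | _ n ih =>
  cases w with
  | nil => simp [hF, triTail]
  | cons b u =>
    subst hn
    have hprefix : cauchy (fun v => D (g v)) (subst (fun v => F (b :: v)) g) u =
        cauchy (bullet H g) (subst (fun v => F (b :: v)) g) u :=
      cauchy_congr fun k hk => by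
        rw [hg _ (by simp only [List.length_take, List.length_cons]; omega)]
    have hsuffix : cauchy g (fun v => D (subst (fun v => F (b :: v)) g v)) u =
        cauchy g (subst (triTail (fun v => F (b :: v)) H) g) u :=
      cauchy_congr fun k hk => by
        rw [ih _ (by simp only [List.length_drop, List.length_cons]; omega) _ (fun v => hF _) _
          (fun v hv => hg v (by simp only [List.length_drop, List.length_cons] at hv ⊢; omega))
          rfl]
    have htail : (fun v => triTail F H (b :: v)) =
        cauchy H (fun v => F (b :: v)) + triTail (fun v => F (b :: v)) H :=
      tri_eq_cauchy_add_triTail (fun v => F (b :: v)) H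
    rw [subst_cons, derivation_cauchy, hprefix, hsuffix, subst_cons, htail, subst_add,
      subst_cauchy, cauchy_add_right, Pi.add_apply, bullet, cauchy_assoc]

lemma derivation_bullet (F H M : Word → S) (hF : ∀ v, D (F v) = 0) (hF₀ : F [] = 0) (w : Word)
    (hM : ∀ v : Word, v.length < w.length → D (M v) = bullet H M v) :
    D (bullet F M w) = bullet (tri F H) M w := by
  have hprefix : cauchy (fun v => D (M v)) (subst F M) w = cauchy (bullet H M) (subst F M) w := by
    refine cauchy_congr fun k hk => ?_
    rcases hk.lt_or_eq with hk | rfl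
    · rw [hM _ (by simpa using hk)]
    · simp [hF₀]
  have hsuffix : cauchy M (fun v => D (subst F M v)) w = cauchy M (subst (triTail F H) M) w :=
    cauchy_congr fun k hk => by
      rw [derivation_subst D F H M hF _ fun v hv =>
        hM v (by simp only [List.length_drop] at hv; omega)]
  rw [bullet, derivation_cauchy, hprefix, hsuffix, bullet, bullet, cauchy_assoc,
    tri_eq_cauchy_add_triTail, subst_add, subst_cauchy, cauchy_add_right, Pi.add_apply]

end derivation

section Mpoly
variable [Field A] (h : Word → A)

lemma Mpoly_nil : Mpoly h [] = 1 := by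
  simp [Mpoly, one]

lemma coeff_Mpoly_zero (w : Word) : (Mpoly h w).coeff 0 = one w := by
  simp [Mpoly, coeff_X_pow]

lemma eval_zero_Mpoly (w : Word) : (Mpoly h w).eval 0 = one w := by
  rw [← coeff_zero_eq_eval_zero, coeff_Mpoly_zero]

lemma coeff_Mpoly_add_one (hh : h [] = 0) (w : Word) (j : ℕ) :
    (Mpoly h w).coeff (j + 1) = R h j w / (j + 1).factorial := by
  rw [Mpoly, coeff_add, coeff_C_succ, zero_add, finsetSum_coeff, sum_eq_single (j + 1)]
  · rw [coeff_C_mul_X_pow, if_pos rfl, Nat.add_sub_cancel]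
  · intro n _ hn
    rw [coeff_C_mul_X_pow, if_neg (Ne.symm hn)]
  · intro hj
    rw [coeff_C_mul_X_pow, if_pos rfl, Nat.add_sub_cancel,
      R_apply_eq_zero h hh j w (by simp only [mem_Icc, not_and_or] at hj; omega), zero_div]

lemma eval_bullet_C (f : Word → A) (P : Word → A[X]) (t : A) (w : Word) :
    (bullet (fun v => C (f v)) P w).eval t = bullet f (fun v => (P v).eval t) w := by
  simp only [bullet, ← coe_evalRingHom, map_cauchy, map_subst]
  simp

lemma coeff_tri_C (F : Word → A[X]) (g : Word → A) (w : Word) (j : ℕ) :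
    (tri F (fun u => C (g u)) w).coeff j = tri (fun u => (F u).coeff j) g w := by
  simp [tri, finsetSum_coeff]

variable [CharZero A]

lemma coeff_bullet_Mpoly (w : Word)
    (hM : ∀ v : Word, v.length < w.length →
      derivative (Mpoly h v) = bullet (fun u => C (h u)) (Mpoly h) v)
    (j : ℕ) (f : Word → A) (hf : f [] = 0) :
    (bullet (fun v => C (f v)) (Mpoly h) w).coeff j =
      (fun g => tri g h)^[j] f w / j.factorial := by
  induction j generalizing f with
  | zero =>
    rw [coeff_zero_eq_eval_zero, eval_bullet_C]
    simp [eval_zero_Mpoly, bullet, subst_one, cauchy_one_left]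
  | succ j ih =>
    have hderiv := derivation_bullet derivative' (fun v => C (f v)) (fun v => C (h v)) (Mpoly h)
      (fun v => derivation_C _ _) (by simp [hf]) w (by simpa using hM)
    have htri : tri (fun v => C (f v)) (fun v => C (h v)) = fun v => C (tri f h v) := by
      ext1 v
      exact (map_tri C f h v).symm
    have hcoeff := coeff_derivative (bullet (fun v => C (f v)) (Mpoly h) w) j
    rw [derivative'_apply] at hderiv
    rw [hderiv, htri, ih _ (by simp [tri, hf])] at hcoeff
    rw [Function.iterate_succ_apply, Nat.factorial_succ, Nat.cast_mul, Nat.cast_succ, mul_comm,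
      ← div_div, hcoeff, mul_div_cancel_right₀ _ (Nat.cast_add_one_ne_zero j)]

theorem derivative_Mpoly_eq_bullet (hh : h [] = 0) (w : Word) :
    derivative (Mpoly h w) = bullet (fun u => C (h u)) (Mpoly h) w := by
  induction hn : w.length using Nat.strong_induction_on generalizing w with
  | _ n ih =>
  subst hn
  ext j
  rw [coeff_bullet_Mpoly h w (fun v hv => ih _ hv v rfl) j h hh, ← R_eq_iterate, coeff_derivative,
    coeff_Mpoly_add_one h hh, Nat.factorial_succ, Nat.cast_mul, Nat.cast_succ]
  field_simp

theorem derivative_Mpoly_eq_tri (hh : h [] = 0) (w : Word) :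
    derivative (Mpoly h w) =
      C (h w) + tri (fun u => Mpoly h u - C (one u)) (fun u => C (h u)) w := by
  ext j
  rw [coeff_derivative, coeff_add, coeff_tri_C, coeff_C]
  cases j with
  | zero => simp [coeff_Mpoly_zero, coeff_Mpoly_add_one h hh, tri, R]
  | succ j =>
    have hcoeff (u : Word) :
        (Mpoly h u - C (one u)).coeff (j + 1) = R h j u / (j + 1).factorial := by
      rw [coeff_sub, coeff_C_succ, sub_zero, coeff_Mpoly_add_one h hh]
    have htri : tri (fun u => R h j u / ((j + 1).factorial : A)) h w =
        R h (j + 1) w / (j + 1).factorial := by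
      simp only [R, tri, sum_div, div_mul_eq_mul_div]
    rw [if_neg j.succ_ne_zero, zero_add, funext hcoeff, htri, coeff_Mpoly_add_one h hh,
      Nat.factorial_succ (j + 1), Nat.cast_mul, Nat.cast_succ (j + 1), div_mul_eq_mul_div,
      mul_comm (R h (j + 1) w), mul_div_mul_left _ _ (Nat.cast_add_one_ne_zero (j + 1))]

end Mpoly

/-- monotone flow equation.  For `h ∈ G^0`, the series
`M_t = 1 + Σ_{n≥1} (t^n/n!)·R^{(n−1)}(h)` (each coefficient a polynomial in `t`, the sum
on a word `w` being finite because `R^{(n−1)}(h)(w) = 0` once `n > |w|`) satisfies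
`M_0 = 1`, `M_t ∈ G^1`, and the coefficient-wise `t`-derivative satisfies
`d/dt M_t = M_t · h(x M_t(x)) = h + (M_t − 1) ◁ h`. -/
theorem stmt15 [Field A] [CharZero A] (h : Word → A) (hh : h [] = 0) :
    (∀ n w, w.length ≤ n → R h n w = 0) ∧
    (∀ w : Word, (Mpoly h w).eval 0 = one w) ∧
    (∀ t : A, (Mpoly h []).eval t = 1) ∧
    (∀ t : A, ∀ w : Word,
      ((Mpoly h w).derivative.eval t =
          cauchy (fun u => (Mpoly h u).eval t)
            (subst h (fun u => (Mpoly h u).eval t)) w) ∧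
      ((Mpoly h w).derivative.eval t =
          h w + tri (fun u => (Mpoly h u).eval t - one u) h w)) := by
  refine ⟨R_apply_eq_zero h hh, eval_zero_Mpoly h, fun t => by simp [Mpoly_nil],
    fun t w => ⟨?_, ?_⟩⟩
  · rw [derivative_Mpoly_eq_bullet h hh w, eval_bullet_C]
    rfl
  · rw [derivative_Mpoly_eq_tri h hh w, eval_add, eval_C, ← coe_evalRingHom, map_tri]
    simp
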